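/- Let $\int_n$ denote the simplex iterated integral. For $0 < i < n$ and polynomials $p, q_1,\dots,q_n$ with $p(0)=0$, inserting $p'$ after the $i$-th slot satisfies: $\int_{n+1} q_1\otimes\cdots\otimes q_i\otimes p'\otimes q_{i+1}\otimes\cdots\otimes q_n = -\int_n q_1\otimes\cdots\otimes(q_i p)\otimes q_{i+1}\otimes\cdots\otimes q_n + \int_n q_1\otimes\cdots\otimes q_i\otimes (p\, q_{i+1})\otimes\cdots\otimes q_n$. -/

import Mathlib

open MeasureTheory

/-- The standard simplex `0 ≤ t_1 ≤ ⋯ ≤ t_n ≤ 1` in `ℝⁿ`. -/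
def simplexSet (n : ℕ) : Set (Fin n → ℝ) :=
  {t | (∀ i, t i ∈ Set.Icc (0:ℝ) 1) ∧ Monotone t}

/-- The simplex iterated integral `∫ₙ p₁ ⊗ ⋯ ⊗ pₙ` of `n` polynomials. -/
noncomputable def simplexInt (n : ℕ) (p : Fin n → Polynomial ℝ) : ℝ :=
  ∫ t in simplexSet n, ∏ i, (p i).eval (t i)

/-!
For `x ≥ 0` the integral `I(r₁, …, rₙ)(x)` of `r₁(t₁)⋯rₙ(tₙ)` over `0 ≤ t₁ ≤ ⋯ ≤ tₙ ≤ x` is a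
polynomial in `x`: by Fubini in the last variable it is `∫₀ˣ rₙ(s) I(r₁, …, rₙ₋₁)(s) ds`, built from
`1` by the steps `B ↦ ∫₀ˣ r B`, `r = r₁, …, rₙ`. In this picture the theorem is integration by
parts in the variable carrying `p'`: `∫₀ˣ p' B = p B - ∫₀ˣ p B'`, the boundary term at `0`
vanishing because `p(0) = 0`. As `B' = q_i A`, the boundary term multiplies `p` into the next
factor `q_{i+1}`, and the remaining integral multiplies it into `q_i`, with a minus sign.
-/

open Polynomial Set

theorem Fin.monotone_snoc_iff {α : Type*} [Preorder α] {n : ℕ} {t : Fin n → α} {s : α} :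
    Monotone (Fin.snoc t s : Fin (n + 1) → α) ↔ Monotone t ∧ ∀ i, t i ≤ s := by
  refine ⟨fun h => ⟨fun a b hab => ?_, fun i => ?_⟩, fun ⟨ht, hs⟩ a b hab => ?_⟩
  · simpa using h (Fin.castSucc_le_castSucc_iff.2 hab)
  · simpa using h (Fin.le_last i.castSucc)
  · induction b using Fin.lastCases with
    | last => induction a using Fin.lastCases <;> simp [hs]
    | cast b =>
      obtain ⟨a, rfl⟩ :=
        Fin.exists_castSucc_eq.2 (ne_of_lt (lt_of_le_of_lt hab (Fin.castSucc_lt_last b)))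
      simpa using ht (Fin.castSucc_le_castSucc_iff.1 hab)

theorem List.ofFn_insertNth {α : Type*} {n : ℕ} (i : Fin (n + 1)) (x : α) (q : Fin n → α) :
    List.ofFn (Fin.insertNth i x q) = (List.ofFn q).insertIdx i x := by
  apply List.ext_getElem (by simp [List.length_insertIdx_of_le_length, Nat.lt_succ_iff.1 i.2])
  intro k h1 _
  rw [List.getElem_insertIdx]
  simp only [List.getElem_ofFn]
  split_ifs with hlt heq
  · rw [Fin.insertNth_apply_below (by simpa [Fin.lt_def] using hlt)]
    simp only [eq_rec_constant]; rfl
  · rw [show (⟨k, by simpa using h1⟩ : Fin (n + 1)) = i from Fin.ext heq,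
      Fin.insertNth_apply_same]
  · rw [Fin.insertNth_apply_above (by simp [Fin.lt_def]; omega)]
    simp only [eq_rec_constant]; rfl

theorem List.ofFn_update {α : Type*} {n : ℕ} (j : Fin n) (x : α) (q : Fin n → α) :
    List.ofFn (Function.update q j x) = (List.ofFn q).set j x := by
  apply List.ext_getElem (by simp)
  intro k _ _
  simp [List.getElem_set, Function.update_apply, Fin.ext_iff, eq_comm]

theorem List.insertIdx_length_add_append {α : Type*} (m l : List α) (j : ℕ) (x : α) :
    (m ++ l).insertIdx (m.length + j) x = m ++ l.insertIdx j x := by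
  induction m with
  | nil => simp
  | cons y m ih => rw [List.length_cons, Nat.add_right_comm, List.cons_append,
      List.insertIdx_succ_cons, ih, List.cons_append]

theorem List.exists_eq_append_getElem_cons_getElem_cons {α : Type*} (L : List α) (j : ℕ)
    (h : j + 1 < L.length) : ∃ m k, L = m ++ L[j] :: L[j + 1] :: k ∧ m.length = j := by
  refine ⟨L.take j, L.drop (j + 2), ?_, by simp; omega⟩
  rw [← List.drop_eq_getElem_cons, ← List.drop_eq_getElem_cons, List.take_append_drop]

namespace Polynomial

variable {K : Type*} [Field K]

noncomputable def antideriv (r : K[X]) : K[X] :=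
  r.sum fun k a => C (a / (k + 1)) * X ^ (k + 1)

@[simp]
theorem derivative_antideriv [CharZero K] (r : K[X]) : derivative (antideriv r) = r := by
  conv_rhs => rw [← r.sum_C_mul_X_pow_eq]
  simp only [antideriv, Polynomial.sum, map_sum, derivative_C_mul_X_pow]
  refine Finset.sum_congr rfl fun k _ => ?_
  push_cast
  rw [div_mul_cancel₀ _ (Nat.cast_add_one_ne_zero k)]

@[simp]
theorem eval_zero_antideriv (r : K[X]) : (antideriv r).eval 0 = 0 := by
  simp [antideriv, Polynomial.sum, eval_finsetSum]

theorem eq_antideriv_of_derivative_eq [CharZero K] {u r : K[X]} (h : derivative u = r)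
    (h0 : u.eval 0 = 0) : u = antideriv r := by
  have hc : derivative (u - antideriv r) = 0 := by simp [h]
  rw [← sub_eq_zero, eq_C_of_natDegree_eq_zero (derivative_eq_zero.1 hc),
    coeff_zero_eq_eval_zero]
  simp [h0]

theorem antideriv_sub [CharZero K] (r s : K[X]) : antideriv (r - s) = antideriv r - antideriv s :=
  (eq_antideriv_of_derivative_eq (by simp) (by simp)).symm

theorem antideriv_derivative_mul [CharZero K] {p : K[X]} (hp : p.eval 0 = 0) (B : K[X]) :
    antideriv (derivative p * B) = p * B - antideriv (p * derivative B) :=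
  (eq_antideriv_of_derivative_eq (by simp [derivative_mul]) (by simp [hp])).symm

theorem integral_eval_eq_eval_antideriv (r : ℝ[X]) (x : ℝ) :
    ∫ s in 0..x, r.eval s = (antideriv r).eval x := by
  rw [intervalIntegral.integral_eq_sub_of_hasDerivAt
    (fun y _ => by simpa using (antideriv r).hasDerivAt y) (r.continuous.intervalIntegrable _ _),
    eval_zero_antideriv, sub_zero]

noncomputable def iterAntideriv (B : K[X]) (l : List K[X]) : K[X] :=
  l.foldl (fun B r => antideriv (r * B)) B

@[simp]
theorem iterAntideriv_nil (B : K[X]) : iterAntideriv B [] = B :=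
  rfl

theorem iterAntideriv_cons (B r : K[X]) (l : List K[X]) :
    iterAntideriv B (r :: l) = iterAntideriv (antideriv (r * B)) l :=
  rfl

theorem iterAntideriv_append (B : K[X]) (m l : List K[X]) :
    iterAntideriv B (m ++ l) = iterAntideriv (iterAntideriv B m) l :=
  List.foldl_append

theorem iterAntideriv_sub [CharZero K] (B B' : K[X]) (l : List K[X]) :
    iterAntideriv (B - B') l = iterAntideriv B l - iterAntideriv B' l := by
  induction l generalizing B B' with
  | nil => rfl
  | cons r l ih => rw [iterAntideriv_cons, mul_sub, antideriv_sub, ih]; rfl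

theorem iterAntideriv_append_derivative [CharZero K] {p : K[X]} (hp : p.eval 0 = 0) (B a c : K[X])
    (m k : List K[X]) :
    iterAntideriv B (m ++ a :: derivative p :: c :: k) =
      iterAntideriv B (m ++ a :: (p * c) :: k) - iterAntideriv B (m ++ (a * p) :: c :: k) := by
  simp only [iterAntideriv_append, iterAntideriv_cons]
  rw [← iterAntideriv_sub]
  congr 1
  rw [antideriv_derivative_mul hp, derivative_antideriv, ← antideriv_sub]
  ring_nf

end Polynomial

def simplexUpTo (n : ℕ) (x : ℝ) : Set (Fin n → ℝ) :=
  {t | (∀ i, t i ∈ Set.Icc 0 x) ∧ Monotone t}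

theorem isCompact_simplexUpTo (n : ℕ) (x : ℝ) : IsCompact (simplexUpTo n x) := by
  have : simplexUpTo n x = Icc 0 (fun _ => x) ∩ {t | Monotone t} := by
    ext t; simp [simplexUpTo, Pi.le_def, forall_and]
  rw [this]
  exact isCompact_Icc.inter_right isClosed_monotone

theorem snoc_mem_simplexUpTo_iff {n : ℕ} {x s : ℝ} {t : Fin n → ℝ} :
    Fin.snoc t s ∈ simplexUpTo (n + 1) x ↔ s ∈ Icc 0 x ∧ t ∈ simplexUpTo n s := by
  simp only [simplexUpTo, mem_ofPred_eq, Fin.forall_fin_succ', Fin.snoc_castSucc, Fin.snoc_last,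
    Fin.monotone_snoc_iff, mem_Icc]
  constructor
  · rintro ⟨⟨ht, hs⟩, hm, hts⟩
    exact ⟨hs, fun i => ⟨(ht i).1, hts i⟩, hm⟩
  · rintro ⟨hs, ht, hm⟩
    exact ⟨⟨fun i => ⟨(ht i).1, (ht i).2.trans hs.2⟩, hs⟩, hm, fun i => (ht i).2⟩

theorem setIntegral_simplexUpTo_succ {n : ℕ} {x : ℝ} {f : (Fin (n + 1) → ℝ) → ℝ}
    (hf : Continuous f) :
    ∫ t in simplexUpTo (n + 1) x, f t =
      ∫ s in Icc 0 x, ∫ t in simplexUpTo n s, f (Fin.snoc t s) := by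
  set e : ℝ × (Fin n → ℝ) ≃ᵐ (Fin (n + 1) → ℝ) :=
    (MeasurableEquiv.piFinSuccAbove (fun _ => ℝ) (Fin.last n)).symm
  have he : MeasurePreserving e :=
    (volume_preserving_piFinSuccAbove (fun _ : Fin (n + 1) => ℝ) (Fin.last n)).symm _
  have he_apply (v : ℝ × (Fin n → ℝ)) : e v = Fin.snoc v.2 v.1 := by
    simp [e, MeasurableEquiv.piFinSuccAbove_symm_apply, Fin.insertNthEquiv, Fin.insertNth_last']
  have hS : MeasurableSet (e ⁻¹' simplexUpTo (n + 1) x) :=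
    e.measurable (isCompact_simplexUpTo _ x).isClosed.measurableSet
  have hint :
      Integrable ((e ⁻¹' simplexUpTo (n + 1) x).indicator (f ∘ e)) (volume.prod volume) := by
    rw [integrable_indicator_iff hS, ← Measure.volume_eq_prod,
      he.integrableOn_comp_preimage e.measurableEmbedding]
    exact hf.continuousOn.integrableOn_compact (isCompact_simplexUpTo _ x)
  have hmem (s : ℝ) (t : Fin n → ℝ) :
      (s, t) ∈ e ⁻¹' simplexUpTo (n + 1) x ↔ s ∈ Icc 0 x ∧ t ∈ simplexUpTo n s := by
    rw [mem_preimage, he_apply, snoc_mem_simplexUpTo_iff]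
  have hslice (s : ℝ) : ∫ t, (e ⁻¹' simplexUpTo (n + 1) x).indicator (f ∘ e) (s, t) =
      (Icc 0 x).indicator (fun s => ∫ t in simplexUpTo n s, f (Fin.snoc t s)) s := by
    classical
    by_cases hs : s ∈ Icc 0 x
    · rw [indicator_of_mem hs,
        ← integral_indicator (isCompact_simplexUpTo n s).isClosed.measurableSet]
      congr 1 with t
      simp only [indicator_apply, hmem, hs, true_and, Function.comp_apply, he_apply]
    · simp only [indicator_apply, hmem, hs, false_and, if_false, integral_zero]
  calc ∫ t in simplexUpTo (n + 1) x, f t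
      = ∫ v in e ⁻¹' simplexUpTo (n + 1) x, (f ∘ e) v ∂(volume.prod volume) := by
        rw [← Measure.volume_eq_prod]
        exact (he.setIntegral_preimage_emb e.measurableEmbedding f _).symm
    _ = ∫ s, ∫ t, (e ⁻¹' simplexUpTo (n + 1) x).indicator (f ∘ e) (s, t) := by
        rw [← integral_indicator hS]; exact integral_prod _ hint
    _ = ∫ s in Icc 0 x, ∫ t in simplexUpTo n s, f (Fin.snoc t s) := by
        simp_rw [hslice]; exact integral_indicator measurableSet_Icc

theorem setIntegral_simplexUpTo_prod_eval {n : ℕ} (p : Fin n → ℝ[X]) {x : ℝ} (hx : 0 ≤ x) :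
    ∫ t in simplexUpTo n x, ∏ i, (p i).eval (t i) = (iterAntideriv 1 (List.ofFn p)).eval x := by
  induction n generalizing x with
  | zero => simp [simplexUpTo, iterAntideriv, Subsingleton.monotone, volume_pi, measureReal_def]
  | succ n ih =>
    have hcont : Continuous fun t : Fin (n + 1) → ℝ => ∏ i, (p i).eval (t i) := by fun_prop
    rw [setIntegral_simplexUpTo_succ hcont, List.ofFn_succ_last, iterAntideriv_append,
      iterAntideriv_cons, iterAntideriv_nil, ← integral_eval_eq_eval_antideriv,
      intervalIntegral.integral_of_le hx, ← integral_Icc_eq_integral_Ioc]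
    refine setIntegral_congr_fun measurableSet_Icc fun s hs => ?_
    simp only [Fin.prod_univ_castSucc, Fin.snoc_castSucc, Fin.snoc_last, integral_mul_const,
      ih _ hs.1, eval_mul]
    exact mul_comm _ _

theorem simplexInt_eq_eval_iterAntideriv (n : ℕ) (p : Fin n → ℝ[X]) :
    simplexInt n p = (iterAntideriv 1 (List.ofFn p)).eval 1 :=
  setIntegral_simplexUpTo_prod_eval p zero_le_one

/-- For `0 < i < n` and `p(0) = 0`, inserting `p'` after the `i`-th slot:
`∫_{n+1} q₁ ⊗ ⋯ ⊗ q_i ⊗ p' ⊗ q_{i+1} ⊗ ⋯ ⊗ qₙ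
  = - ∫ₙ q₁ ⊗ ⋯ ⊗ (q_i p) ⊗ q_{i+1} ⊗ ⋯ ⊗ qₙ
    + ∫ₙ q₁ ⊗ ⋯ ⊗ q_i ⊗ (p q_{i+1}) ⊗ ⋯ ⊗ qₙ`. -/
theorem stmt_4 (n i : ℕ) (hi0 : 0 < i) (hin : i < n)
    (p : Polynomial ℝ) (q : Fin n → Polynomial ℝ) (hp : p.eval 0 = 0) :
    simplexInt (n + 1)
        (Fin.insertNth (⟨i, by omega⟩ : Fin (n + 1)) (Polynomial.derivative p) q) =
      - simplexInt n
          (Function.update q (⟨i - 1, by omega⟩ : Fin n)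
            (q (⟨i - 1, by omega⟩ : Fin n) * p))
        + simplexInt n
            (Function.update q (⟨i, hin⟩ : Fin n) (p * q (⟨i, hin⟩ : Fin n))) := by
  obtain ⟨m, k, hq, hm⟩ :=
    (List.ofFn q).exists_eq_append_getElem_cons_getElem_cons (i - 1) (by simp; omega)
  simp only [List.getElem_ofFn, Nat.sub_add_cancel hi0] at hq
  obtain rfl : i = m.length + 1 := by omega
  simp only [simplexInt_eq_eval_iterAntideriv, List.ofFn_insertNth, List.ofFn_update, hq,
    add_tsub_cancel_right, List.insertIdx_length_add_append, List.insertIdx_succ_cons,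
    List.insertIdx_zero, List.set_append_right, le_refl, le_add_iff_nonneg_right, zero_le,
    tsub_self, add_tsub_cancel_left, List.set_cons_zero, List.set_cons_succ]
  rw [iterAntideriv_append_derivative hp, eval_sub]
  ring
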